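/- arXiv:2510.14410 — 2 statements merged into one kernel-verified Lean document; each statement's English description precedes it below -/
import Mathlib

section
/- Let d ≥ 1 and let g be a nonnegative Schwartz function on ℝ. If ∫_ℝ g(x)^{m₀} e^{|x|} dx < ∞ for some real m₀ ≥ 2, then sup_{x ∈ ℝ} g(x)^{m₀+1} e^{|x|} < ∞. -/
/-!
Set `C = (m₀ + 1) sup |g'| + sup g`. On `[0, ∞)` the function `h = g^{m₀+1} e^{x}` has derivative
`((m₀ + 1) g' g^{m₀} + g^{m₀+1}) e^{x} ≤ C g^{m₀} e^{|x|}`, so `h x ≤ h 0 + C ∫ g^{m₀} e^{|x|}`.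
The half-line `(-∞, 0]` is the same estimate applied to `x ↦ g (-x)`.
-/

open MeasureTheory Real

theorem le_add_integral_of_hasDerivAt_le {F F' w : ℝ → ℝ} {a b : ℝ} (hab : a ≤ b)
    (hF : ∀ t, HasDerivAt F (F' t) t) (hw : Integrable w) (hw₀ : ∀ t, 0 ≤ w t)
    (hF' : ∀ t ∈ Set.Ioo a b, F' t ≤ w t) :
    F b ≤ F a + ∫ t, w t := by
  have hFTC : F b - F a ≤ ∫ t in a..b, w t :=
    intervalIntegral.sub_le_integral_of_hasDeriv_right_of_le hab
      (fun t _ => (hF t).continuousAt.continuousWithinAt)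
      (fun t _ => (hF t).hasDerivWithinAt) hw.integrableOn hF'
  have hle : ∫ t in a..b, w t ≤ ∫ t, w t := by
    rw [intervalIntegral.integral_of_le hab]
    exact setIntegral_le_integral hw (Filter.Eventually.of_forall hw₀)
  linarith

theorem mul_rpow_add_rpow_succ_le {m y y' B₁ B₂ : ℝ} (hm : 0 ≤ m) (hy : 0 ≤ y)
    (hB₁ : y ≤ B₁) (hB₂ : |y'| ≤ B₂) :
    y' * (m + 1) * y ^ m + y ^ (m + 1) ≤ ((m + 1) * B₂ + B₁) * y ^ m := by
  have hym : 0 ≤ y ^ m := rpow_nonneg hy m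
  rw [rpow_add_of_nonneg hy hm zero_le_one, rpow_one]
  have hy' : y' * (m + 1) ≤ B₂ * (m + 1) :=
    mul_le_mul_of_nonneg_right ((le_abs_self y').trans hB₂) (by linarith)
  nlinarith

theorem rpow_succ_mul_exp_le_of_nonneg {g : ℝ → ℝ} {m B₁ B₂ : ℝ} (hm : 0 ≤ m)
    (hg : Differentiable ℝ g) (hg₀ : ∀ t, 0 ≤ g t) (hB₁ : ∀ t, g t ≤ B₁)
    (hB₂ : ∀ t, |deriv g t| ≤ B₂) (hint : Integrable fun t => g t ^ m * exp |t|) :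
    ∀ x, 0 ≤ x →
      g x ^ (m + 1) * exp x ≤ g 0 ^ (m + 1) + ((m + 1) * B₂ + B₁) * ∫ t, g t ^ m * exp |t| := by
  intro x hx
  have hC : 0 ≤ (m + 1) * B₂ + B₁ := by
    have := (abs_nonneg _).trans (hB₂ 0)
    have := (hg₀ 0).trans (hB₁ 0)
    positivity
  have hderiv : ∀ t, HasDerivAt (fun t => g t ^ (m + 1) * exp t)
      ((deriv g t * (m + 1) * g t ^ m + g t ^ (m + 1)) * exp t) t := by
    intro t
    have hpow := (hg t).hasDerivAt.rpow_const (p := m + 1) (Or.inr (by linarith))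
    simp only [add_sub_cancel_right] at hpow
    exact (hpow.mul (hasDerivAt_exp t)).congr_deriv (by ring)
  have hmain := le_add_integral_of_hasDerivAt_le hx hderiv (hint.const_mul _)
    (fun t => mul_nonneg hC (mul_nonneg (rpow_nonneg (hg₀ t) m) (exp_pos _).le))
    (fun t ht => by
      rw [abs_of_pos ht.1, ← mul_assoc]
      exact mul_le_mul_of_nonneg_right
        (mul_rpow_add_rpow_succ_le hm (hg₀ t) (hB₁ t) (hB₂ t)) (exp_pos t).le)
  simpa [integral_const_mul] using hmain

/-- If `g` is a nonnegative Schwartz function on `ℝ` and `∫ g^{m₀} e^{|x|} dx < ∞`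
for some real `m₀ ≥ 2`, then `g^{m₀+1} e^{|x|}` is bounded on `ℝ`. -/
theorem stmt1 (g : SchwartzMap ℝ ℝ) (hg : ∀ x, 0 ≤ g x) (m₀ : ℝ) (hm₀ : 2 ≤ m₀)
    (hint : Integrable (fun x : ℝ => (g x) ^ m₀ * Real.exp |x|)) :
    ∃ C : ℝ, ∀ x : ℝ, (g x) ^ (m₀ + 1) * Real.exp |x| ≤ C := by
  set B₁ := SchwartzMap.seminorm ℝ 0 0 g
  set B₂ := SchwartzMap.seminorm ℝ 0 0 (SchwartzMap.derivCLM ℝ ℝ g)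
  have hB₁ (t : ℝ) : g t ≤ B₁ := (le_abs_self _).trans (g.norm_le_seminorm ℝ t)
  have hB₂ (t : ℝ) : |deriv g t| ≤ B₂ := by
    simpa [SchwartzMap.derivCLM_apply] using (SchwartzMap.derivCLM ℝ ℝ g).norm_le_seminorm ℝ t
  have hm : 0 ≤ m₀ := by linarith
  have hright := rpow_succ_mul_exp_le_of_nonneg hm g.differentiable hg hB₁ hB₂ hint
  have hleft := rpow_succ_mul_exp_le_of_nonneg (g := fun t => g (-t)) hm
    (g.differentiable.comp differentiable_neg) (fun t => hg (-t)) (fun t => hB₁ (-t))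
    (fun t => by simpa [deriv_comp_neg] using hB₂ (-t))
    (by simpa using hint.comp_neg)
  refine ⟨g 0 ^ (m₀ + 1) + ((m₀ + 1) * B₂ + B₁) * ∫ t, g t ^ m₀ * exp |t|, fun x => ?_⟩
  rcases le_total 0 x with hx | hx
  · simpa only [abs_of_nonneg hx] using hright x hx
  · have hI : ∫ t, g (-t) ^ m₀ * exp |t| = ∫ t, g t ^ m₀ * exp |t| := by
      simpa using integral_neg_eq_self (fun t => g t ^ m₀ * exp |t|) volume
    simpa only [abs_of_nonpos hx, neg_neg, neg_zero, hI] using hleft (-x) (neg_nonneg.mpr hx)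
end

section
/- Let g₁, g₂ : ℝᵈ → ℝ satisfy |gᵢ(x)| ≤ C₁ e^{−δ₀|x|} for i = 1,2 with δ₀, C₁ > 0. Let v₁ ≠ v₂ ∈ ℝᵈ, w₁, w₂ > 0, α₁, α₂ ∈ ℝᵈ with w_k⁻¹ + w_k + |v_k| + |α_k| ≤ C₂. For p₁, p₂ > 0 define G_{i,k}(t,x) = w_k^{−2/(p−1)} gᵢ((x − v_k t − α_k)/w_k). Then there exist constants C, δ₂ > 0 (depending only on δ₀, C₁, C₂, p₁, p₂, p, d, and |v₁ − v₂|) such that for all t ≥ 0: ∫_{ℝᵈ} |G_{1,1}(t,x)|^{p₁} |G_{2,2}(t,x)|^{p₂} dx ≤ C e^{−δ₂ t}. -/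
/-!
Each rescaled profile is bounded by an exponential envelope `A e^{-δ‖x - aₖ(t)‖}` centred at
`aₖ(t) = t vₖ + αₖ`. Since `‖x - a₁‖ + ‖x - a₂‖ ≥ ‖a₁ - a₂‖`, the product of the two envelopes
is at most `e^{-δ‖a₁ - a₂‖/2} e^{-δ‖x - a₁‖/2}`; integrating in `x` leaves `e^{-δ‖a₁ - a₂‖/2}`,
and `‖a₁(t) - a₂(t)‖ ≥ t ‖v₁ - v₂‖ - 2 C₂` grows linearly in `t`.
-/

open MeasureTheory Real

lemma exp_neg_mul_le_one_add_rpow_neg {b s : ℝ} (hb : 0 < b) (hs : 0 ≤ s) (n : ℕ) :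
    exp (-b * s) ≤ exp b * n.factorial / b ^ n * (1 + s) ^ (-(n : ℝ)) := by
  have hpow : (b * (1 + s)) ^ n / n.factorial ≤ exp (b * (1 + s)) :=
    pow_div_factorial_le_exp _ (by positivity) n
  have hexp : exp (-b * s) = exp b / exp (b * (1 + s)) := by
    rw [← exp_sub]; ring_nf
  rw [hexp, rpow_neg (by positivity), rpow_natCast, div_le_iff₀ (exp_pos _)]
  rw [div_le_iff₀ (by positivity), mul_pow] at hpow
  calc exp b = exp b * n.factorial / b ^ n * ((1 + s) ^ n)⁻¹
        * (b ^ n * (1 + s) ^ n / n.factorial) := by field_simp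
    _ ≤ _ := by gcongr; rwa [div_le_iff₀ (by positivity)]

section Integrability

variable {E : Type*} [NormedAddCommGroup E] [NormedSpace ℝ E] [FiniteDimensional ℝ E]
  [MeasurableSpace E] [BorelSpace E] (μ : Measure E) [μ.IsAddHaarMeasure]

lemma integrable_exp_neg_mul_norm {b : ℝ} (hb : 0 < b) :
    Integrable (fun x : E ↦ exp (-b * ‖x‖)) μ := by
  set n := Module.finrank ℝ E + 1
  refine ((integrable_one_add_norm (μ := μ) (r := n) (by simp [n])).const_mul
    (exp b * n.factorial / b ^ n)).mono' (by fun_prop) (.of_forall fun x ↦ ?_)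
  rw [norm_of_nonneg (exp_pos _).le]
  exact exp_neg_mul_le_one_add_rpow_neg hb (norm_nonneg x) n

end Integrability

section ExpDecay

variable {E : Type*} [NormedAddCommGroup E]

def HasExpDecayBound (f : E → ℝ) (A δ : ℝ) : Prop :=
  ∀ x, |f x| ≤ A * exp (-δ * ‖x‖)

namespace HasExpDecayBound

variable {f : E → ℝ} {A δ : ℝ}

lemma const_nonneg (hf : HasExpDecayBound f A δ) : 0 ≤ A :=
  nonneg_of_mul_nonneg_left ((abs_nonneg _).trans (hf 0)) (exp_pos _)

lemma mono {δ' : ℝ} (hf : HasExpDecayBound f A δ) (hδ : δ' ≤ δ) :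
    HasExpDecayBound f A δ' := fun x ↦ (hf x).trans <| by
  gcongr
  exact hf.const_nonneg

lemma abs_rpow {q : ℝ} (hf : HasExpDecayBound f A δ) (hq : 0 ≤ q) :
    HasExpDecayBound (fun x ↦ |f x| ^ q) (A ^ q) (δ * q) := fun x ↦ by
  calc |(|f x| ^ q)| = |f x| ^ q := abs_of_nonneg (by positivity)
    _ ≤ (A * exp (-δ * ‖x‖)) ^ q := rpow_le_rpow (abs_nonneg _) (hf x) hq
    _ = A ^ q * exp (-(δ * q) * ‖x‖) := by
      rw [mul_rpow hf.const_nonneg (exp_pos _).le, ← exp_mul]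
      ring_nf

lemma rescale [NormedSpace ℝ E] {R s w : ℝ} (hf : HasExpDecayBound f A δ) (hδ : 0 ≤ δ)
    (hs : 0 ≤ s) (hw : 0 < w) (hwR : w ≤ R) (hwR' : w⁻¹ ≤ R) :
    HasExpDecayBound (fun z ↦ w ^ (-s) * f (w⁻¹ • z)) (R ^ s * A) (δ / R) := fun z ↦ by
  have hA := hf.const_nonneg
  have hscale : w ^ (-s) ≤ R ^ s := by
    rw [rpow_neg hw.le, ← inv_rpow hw.le]
    gcongr
  have hdecay : -δ * ‖w⁻¹ • z‖ ≤ -(δ / R) * ‖z‖ := by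
    rw [norm_smul, norm_inv, norm_of_nonneg hw.le, neg_mul, neg_mul, neg_le_neg_iff,
      div_eq_mul_inv, ← mul_assoc]
    gcongr
  rw [abs_mul, abs_of_pos (rpow_pos_of_pos hw _), mul_assoc]
  exact mul_le_mul hscale ((hf _).trans (by gcongr)) (abs_nonneg _)
    (rpow_nonneg (hw.le.trans hwR) s)

end HasExpDecayBound

lemma exp_neg_mul_norm_mul_le {δ : ℝ} (hδ : 0 ≤ δ) (x y : E) :
    exp (-δ * ‖x‖) * exp (-δ * ‖y‖) ≤ exp (-(δ / 2) * ‖x - y‖) * exp (-(δ / 2) * ‖x‖) := by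
  rw [← exp_add, ← exp_add, exp_le_exp]
  nlinarith [mul_le_mul_of_nonneg_left (norm_sub_le x y) hδ, mul_nonneg hδ (norm_nonneg y)]

variable [NormedSpace ℝ E] [FiniteDimensional ℝ E] [MeasurableSpace E] [BorelSpace E]
  (μ : Measure E) [μ.IsAddHaarMeasure]

theorem integral_mul_comp_sub_le {f₁ f₂ : E → ℝ} {A₁ A₂ δ : ℝ}
    (hf₁ : HasExpDecayBound f₁ A₁ δ) (hf₂ : HasExpDecayBound f₂ A₂ δ) (hδ : 0 < δ)
    (a₁ a₂ : E) :
    ∫ x, f₁ (x - a₁) * f₂ (x - a₂) ∂μ ≤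
      A₁ * A₂ * (∫ x, exp (-(δ / 2) * ‖x‖) ∂μ) * exp (-(δ / 2) * ‖a₁ - a₂‖) := by
  have hbound : ∀ x, ‖f₁ (x - a₁) * f₂ (x - a₂)‖ ≤
      A₁ * A₂ * exp (-(δ / 2) * ‖a₁ - a₂‖) * exp (-(δ / 2) * ‖x - a₁‖) := fun x ↦ by
    have hpair := exp_neg_mul_norm_mul_le hδ.le (x - a₁) (x - a₂)
    rw [sub_sub_sub_cancel_left, norm_sub_rev a₂] at hpair
    calc ‖f₁ (x - a₁) * f₂ (x - a₂)‖
        ≤ A₁ * exp (-δ * ‖x - a₁‖) * (A₂ * exp (-δ * ‖x - a₂‖)) := by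
          rw [norm_mul, Real.norm_eq_abs, Real.norm_eq_abs]
          exact mul_le_mul (hf₁ _) (hf₂ _) (abs_nonneg _)
            (mul_nonneg hf₁.const_nonneg (exp_pos _).le)
      _ = A₁ * A₂ * (exp (-δ * ‖x - a₁‖) * exp (-δ * ‖x - a₂‖)) := by ring
      _ ≤ A₁ * A₂ * (exp (-(δ / 2) * ‖a₁ - a₂‖) * exp (-(δ / 2) * ‖x - a₁‖)) :=
          mul_le_mul_of_nonneg_left hpair (mul_nonneg hf₁.const_nonneg hf₂.const_nonneg)
      _ = _ := by ring
  have hint := ((integrable_exp_neg_mul_norm μ (half_pos hδ)).comp_sub_right a₁).const_mul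
    (A₁ * A₂ * exp (-(δ / 2) * ‖a₁ - a₂‖))
  calc ∫ x, f₁ (x - a₁) * f₂ (x - a₂) ∂μ
      ≤ ‖∫ x, f₁ (x - a₁) * f₂ (x - a₂) ∂μ‖ := le_norm_self _
    _ ≤ ∫ x, A₁ * A₂ * exp (-(δ / 2) * ‖a₁ - a₂‖) * exp (-(δ / 2) * ‖x - a₁‖) ∂μ :=
        norm_integral_le_of_norm_le hint (.of_forall hbound)
    _ = _ := by
        rw [integral_const_mul, integral_sub_right_eq_self
          (fun x ↦ exp (-(δ / 2) * ‖x‖)) a₁]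
        ring

end ExpDecay

lemma sub_le_norm_sub_smul_add {E : Type*} [NormedAddCommGroup E] [NormedSpace ℝ E] {t : ℝ}
    (ht : 0 ≤ t) (v₁ v₂ α₁ α₂ : E) :
    t * ‖v₁ - v₂‖ - ‖α₁ - α₂‖ ≤ ‖(t • v₁ + α₁) - (t • v₂ + α₂)‖ := by
  have hsplit : (t • v₁ + α₁) - (t • v₂ + α₂) = t • (v₁ - v₂) + (α₁ - α₂) := by
    rw [smul_sub]; abel
  rw [hsplit]
  simpa [norm_smul, abs_of_nonneg ht] using norm_sub_le_norm_add (t • (v₁ - v₂)) (α₁ - α₂)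

theorem stmt5_general (d : ℕ) (p p₁ p₂ C₁ C₂ δ₀ : ℝ)
    (hp : 1 < p) (hp₁ : 0 < p₁) (hp₂ : 0 < p₂) (hC₁ : 0 < C₁) (hC₂ : 0 < C₂) (hδ₀ : 0 < δ₀)
    (g₁ g₂ : EuclideanSpace ℝ (Fin d) → ℝ)
    (hg₁ : ∀ x, |g₁ x| ≤ C₁ * Real.exp (-δ₀ * ‖x‖))
    (hg₂ : ∀ x, |g₂ x| ≤ C₁ * Real.exp (-δ₀ * ‖x‖))
    (v₁ v₂ : EuclideanSpace ℝ (Fin d)) (hv : v₁ ≠ v₂)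
    (w₁ w₂ : ℝ) (hw₁ : 0 < w₁) (hw₂ : 0 < w₂)
    (α₁ α₂ : EuclideanSpace ℝ (Fin d))
    (hb₁ : w₁⁻¹ + w₁ + ‖v₁‖ + ‖α₁‖ ≤ C₂) (hb₂ : w₂⁻¹ + w₂ + ‖v₂‖ + ‖α₂‖ ≤ C₂) :
    ∃ C > (0:ℝ), ∃ δ₂ > (0:ℝ), ∀ t : ℝ, 0 ≤ t →
      (∫ x, |w₁ ^ (-(2:ℝ) / (p - 1)) * g₁ ((w₁)⁻¹ • (x - t • v₁ - α₁))| ^ p₁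
          * |w₂ ^ (-(2:ℝ) / (p - 1)) * g₂ ((w₂)⁻¹ • (x - t • v₂ - α₂))| ^ p₂)
        ≤ C * Real.exp (-δ₂ * t) := by
  obtain ⟨hw₁C, hw₁C', hα₁⟩ : w₁ ≤ C₂ ∧ w₁⁻¹ ≤ C₂ ∧ ‖α₁‖ ≤ C₂ := by
    refine ⟨?_, ?_, ?_⟩ <;> linarith [inv_pos.2 hw₁, norm_nonneg v₁, norm_nonneg α₁]
  obtain ⟨hw₂C, hw₂C', hα₂⟩ : w₂ ≤ C₂ ∧ w₂⁻¹ ≤ C₂ ∧ ‖α₂‖ ≤ C₂ := by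
    refine ⟨?_, ?_, ?_⟩ <;> linarith [inv_pos.2 hw₂, norm_nonneg v₂, norm_nonneg α₂]
  have hs : 0 ≤ 2 / (p - 1) := div_nonneg zero_le_two (sub_pos.2 hp).le
  set δ := δ₀ / C₂ * min p₁ p₂
  have hδ : 0 < δ := mul_pos (div_pos hδ₀ hC₂) (lt_min hp₁ hp₂)
  have hf₁ := ((HasExpDecayBound.rescale hg₁ hδ₀.le hs hw₁ hw₁C hw₁C').abs_rpow hp₁.le).mono
    (mul_le_mul_of_nonneg_left (min_le_left p₁ p₂) (div_pos hδ₀ hC₂).le)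
  have hf₂ := ((HasExpDecayBound.rescale hg₂ hδ₀.le hs hw₂ hw₂C hw₂C').abs_rpow hp₂.le).mono
    (mul_le_mul_of_nonneg_left (min_le_right p₁ p₂) (div_pos hδ₀ hC₂).le)
  rw [← neg_div] at hf₁ hf₂
  have hI := integral_exp_pos (integrable_exp_neg_mul_norm
    (volume : Measure (EuclideanSpace ℝ (Fin d))) (half_pos hδ))
  have hV : 0 < ‖v₁ - v₂‖ := norm_pos_iff.2 (sub_ne_zero.2 hv)
  refine ⟨(C₂ ^ (2 / (p - 1)) * C₁) ^ p₁ * (C₂ ^ (2 / (p - 1)) * C₁) ^ p₂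
      * (∫ x, exp (-(δ / 2) * ‖x‖)) * exp (δ * C₂), by positivity,
    δ / 2 * ‖v₁ - v₂‖, by positivity, fun t ht ↦ ?_⟩
  have hdecouple := integral_mul_comp_sub_le volume hf₁ hf₂ hδ (t • v₁ + α₁) (t • v₂ + α₂)
  refine (le_of_eq ?_).trans (hdecouple.trans ?_)
  · simp only [sub_add_eq_sub_sub]
  rw [mul_assoc _ (exp _), ← exp_add]
  gcongr
  nlinarith [sub_le_norm_sub_smul_add ht v₁ v₂ α₁ α₂, norm_sub_le α₁ α₂]

/-- Decoupling lemma: for exponentially decaying profiles `g₁, g₂` travelling with distinct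
velocities `v₁ ≠ v₂`, the product of the rescaled moving profiles decays exponentially in time:
`∫ |G_{1,1}(t)|^{p₁} |G_{2,2}(t)|^{p₂} dx ≤ C e^{−δ₂ t}`. -/
theorem stmt5 (d : ℕ) (hd : 1 ≤ d) (p p₁ p₂ C₁ C₂ δ₀ : ℝ)
    (hp : 1 < p) (hp₁ : 0 < p₁) (hp₂ : 0 < p₂) (hC₁ : 0 < C₁) (hC₂ : 0 < C₂) (hδ₀ : 0 < δ₀)
    (g₁ g₂ : EuclideanSpace ℝ (Fin d) → ℝ)
    (hg₁ : ∀ x, |g₁ x| ≤ C₁ * Real.exp (-δ₀ * ‖x‖))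
    (hg₂ : ∀ x, |g₂ x| ≤ C₁ * Real.exp (-δ₀ * ‖x‖))
    (v₁ v₂ : EuclideanSpace ℝ (Fin d)) (hv : v₁ ≠ v₂)
    (w₁ w₂ : ℝ) (hw₁ : 0 < w₁) (hw₂ : 0 < w₂)
    (α₁ α₂ : EuclideanSpace ℝ (Fin d))
    (hb₁ : w₁⁻¹ + w₁ + ‖v₁‖ + ‖α₁‖ ≤ C₂) (hb₂ : w₂⁻¹ + w₂ + ‖v₂‖ + ‖α₂‖ ≤ C₂) :
    ∃ C > (0:ℝ), ∃ δ₂ > (0:ℝ), ∀ t : ℝ, 0 ≤ t →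
      (∫ x, |w₁ ^ (-(2:ℝ) / (p - 1)) * g₁ ((w₁)⁻¹ • (x - t • v₁ - α₁))| ^ p₁
          * |w₂ ^ (-(2:ℝ) / (p - 1)) * g₂ ((w₂)⁻¹ • (x - t • v₂ - α₂))| ^ p₂)
        ≤ C * Real.exp (-δ₂ * t) :=
  stmt5_general d p p₁ p₂ C₁ C₂ δ₀ hp hp₁ hp₂ hC₁ hC₂ hδ₀ g₁ g₂ hg₁ hg₂ v₁ v₂ hv w₁ w₂ hw₁ hw₂ α₁ α₂
    hb₁ hb₂
end
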